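/- If k is a positive integer with s_k(a) ≤ c - 1, then t_k(a,b,c) is not in the additive submonoid generated by { t_0(a,b,c), t_1(a,b,c), …, t_{k-1}(a,b,c) }. -/

import Mathlib

/-- `sF a k = Σ_{i=0}^{k-1} a^i` (so `sF a 0 = 0`). -/
def sF (a k : ℕ) : ℕ := ∑ i ∈ Finset.range k, a ^ i

/-- `tF a b c k = a^k * c + b * sF a k`. -/
def tF (a b c k : ℕ) : ℕ := a ^ k * c + b * sF a k

/-- A θ_{a,b}-semigroup: contains 0, closed under addition, and closed under
`x ↦ a*x + b` on nonzero elements. -/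
def IsThetaSG (a b : ℕ) (S : Set ℕ) : Prop :=
  0 ∈ S ∧ (∀ x ∈ S, ∀ y ∈ S, x + y ∈ S) ∧ ∀ y ∈ S, y ≠ 0 → a * y + b ∈ S

/-- `Gset a b c` : the smallest θ_{a,b}-semigroup containing `c`. -/
def Gset (a b c : ℕ) : Set ℕ := ⋂₀ {S : Set ℕ | IsThetaSG a b S ∧ c ∈ S}

/-- `Hmon a b c` : additive submonoid generated by the `tF a b c k`. -/
def Hmon (a b c : ℕ) : AddSubmonoid ℕ :=
  AddSubmonoid.closure {x | ∃ k, x = tF a b c k}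

/-- `{j_i}_{i=1}^k` is `a`-reduced. -/
def AReduced (a k : ℕ) (j : ℕ → ℕ) : Prop :=
  (∀ i, 1 ≤ i → i ≤ k → j i ≤ a) ∧ j k ≠ 0 ∧
  ∀ m, 1 ≤ m → m ≤ k → j m = a → ∀ i, 1 ≤ i → i < m → j i = 0


/-!
With `d = c (a - 1) + b` every generator is affine in the geometric sum: `t_m = d s_m + c`.
A sum of `N` generators `t_i` with `i < k` is therefore `d S + c N` with `S + N ≤ s_k N`.
If it equalled `t_k = d s_k + c`, then `d (s_k - S) = c (N - 1)`, and since `c` is coprime to `d`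
it divides `s_k - S`, which lies in `[0, c)`; so `S = s_k` and `N = 1`, contradicting
`S + 1 ≤ s_k`.
-/

lemma sF_succ (a n : ℕ) : sF a (n + 1) = sF a n + a ^ n :=
  Finset.sum_range_succ _ _

lemma sF_strictMono {a : ℕ} (ha : 0 < a) : StrictMono (sF a) :=
  strictMono_nat_of_lt_succ fun n => by
    rw [sF_succ]
    exact Nat.lt_add_of_pos_right (pow_pos ha n)

lemma tF_eq_mul_sF_add {a : ℕ} (ha : 0 < a) (b c m : ℕ) :
    tF a b c m = (c * (a - 1) + b) * sF a m + c := by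
  have hgeom : sF a m * ((a : ℤ) - 1) = (a : ℤ) ^ m - 1 := by
    simpa [sF] using geom_sum_mul (a : ℤ) m
  zify [ha] at hgeom ⊢
  rw [tF]
  push_cast
  linear_combination (-(c : ℤ)) * hgeom

lemma exists_eq_of_mem_closure_affine {d c s : ℕ} {G : Set ℕ}
    (hG : ∀ g ∈ G, ∃ u < s, g = d * u + c) {x : ℕ} (hx : x ∈ AddSubmonoid.closure G) :
    ∃ S N, x = d * S + c * N ∧ S + N ≤ s * N := by
  induction hx using AddSubmonoid.closure_induction with
  | mem g hg =>
    obtain ⟨u, hu, rfl⟩ := hG g hg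
    exact ⟨u, 1, by ring, by omega⟩
  | zero => exact ⟨0, 0, by ring, le_rfl⟩
  | add x y _ _ hx hy =>
    obtain ⟨S, N, rfl, hSN⟩ := hx
    obtain ⟨S', N', rfl, hSN'⟩ := hy
    exact ⟨S + S', N + N', by ring, by nlinarith⟩

lemma mul_add_ne_mul_add_mul {d c s S N : ℕ} (hd : 0 < d) (hcd : Nat.Coprime c d) (hsc : s < c)
    (hSN : S + N ≤ s * N) : d * s + c ≠ d * S + c * N := by
  intro heq
  obtain rfl | hN := Nat.eq_zero_or_pos N
  · simp only [mul_zero, Nat.le_zero, add_eq_zero] at hSN heq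
    rw [hSN.1, mul_zero] at heq
    omega
  have hrest : d * s = d * S + c * (N - 1) := by
    have : c * N = c * (N - 1) + c := by rw [← Nat.mul_succ]; congr 1; omega
    omega
  have hSs : S ≤ s := le_of_mul_le_mul_left (hrest ▸ Nat.le_add_right _ _) hd
  have hdvd : c ∣ s - S :=
    hcd.dvd_of_dvd_mul_left ⟨N - 1, by rw [Nat.mul_sub, hrest]; omega⟩
  have hS : S = s := by
    have := Nat.eq_zero_of_dvd_of_lt hdvd (by omega)
    omega
  subst hS
  have hN1 : N = 1 := by
    have hzero : c * (N - 1) = 0 := by omega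
    rcases Nat.mul_eq_zero.mp hzero with h | h <;> omega
  subst hN1
  omega

theorem stmt7_general (a b c : ℕ) (ha : 0 < a) (hb : 0 < b) (hc : 2 ≤ c)
    (hcop : Nat.gcd b c = 1) (k : ℕ) (hs : sF a k ≤ c - 1) :
    tF a b c k ∉ AddSubmonoid.closure {x | ∃ i < k, x = tF a b c i} := by
  intro hmem
  obtain ⟨S, N, heq, hSN⟩ := exists_eq_of_mem_closure_affine
    (by rintro g ⟨i, hik, rfl⟩; exact ⟨sF a i, sF_strictMono ha hik, tF_eq_mul_sF_add ha b c i⟩)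
    hmem
  have hcd : Nat.Coprime c (c * (a - 1) + b) :=
    (Nat.coprime_mul_left_add_right c b (a - 1)).mpr (Nat.Coprime.symm hcop)
  exact mul_add_ne_mul_add_mul (by positivity) hcd (by omega) hSN
    ((tF_eq_mul_sF_add ha b c k).symm.trans heq)

theorem stmt7 (a b c : ℕ) (ha : 0 < a) (hb : 0 < b) (hc : 2 ≤ c)
    (hcop : Nat.gcd b c = 1) (k : ℕ) (hk : 1 ≤ k) (hs : sF a k ≤ c - 1) :
    tF a b c k ∉ AddSubmonoid.closure {x | ∃ i < k, x = tF a b c i} :=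
  stmt7_general a b c ha hb hc hcop k hs
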